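/- Let Λ_1, Λ_2, Γ_1, Γ_2 be unital quantum channels on ℂ^d. Then d_av^ch(Λ_1 ∘ Λ_2, Γ_1 ∘ Γ_2) ≤ d_av^ch(Λ_1, Γ_1) + d_av^ch(Λ_2, Γ_2). -/

import Mathlib

open Matrix Kronecker ComplexOrder

/-- The Hilbert–Schmidt (Frobenius) norm of a complex matrix. -/
noncomputable def hsNorm {n : Type*} [Fintype n] (A : Matrix n n ℂ) : ℝ :=
  Real.sqrt ((Matrix.trace (Aᴴ * A)).re)

/-- The (normalized) Choi matrix `J_Λ = (1/d) ∑ᵢⱼ E_ij ⊗ Λ(E_ij)` of a linear map on matrices. -/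
noncomputable def choi {n : Type*} [Fintype n] [DecidableEq n]
    (Λ : Matrix n n ℂ →ₗ[ℂ] Matrix n n ℂ) : Matrix (n × n) (n × n) ℂ :=
  ((Fintype.card n : ℂ))⁻¹ •
    ∑ i, ∑ j, (Matrix.single i j (1 : ℂ)) ⊗ₖ Λ (Matrix.single i j (1 : ℂ))

/-- A quantum channel: a completely positive (positive semidefinite Choi matrix)
trace-preserving linear map. -/
def IsChannel {n : Type*} [Fintype n] [DecidableEq n]
    (Λ : Matrix n n ℂ →ₗ[ℂ] Matrix n n ℂ) : Prop :=
  (choi Λ).PosSemidef ∧ ∀ X, (Λ X).trace = X.trace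

/-- The average-case distance between quantum channels,
`(1/2) √(‖J_Λ − J_Γ‖_HS² + ‖(Λ−Γ)(I/d)‖_HS²)`. -/
noncomputable def davCh {n : Type*} [Fintype n] [DecidableEq n]
    (Λ Γ : Matrix n n ℂ →ₗ[ℂ] Matrix n n ℂ) : ℝ :=
  (1 / 2) * Real.sqrt ((hsNorm (choi Λ - choi Γ)) ^ 2 +
    (hsNorm (Λ (((Fintype.card n : ℂ))⁻¹ • 1) - Γ (((Fintype.card n : ℂ))⁻¹ • 1))) ^ 2)


/-!
Write `Λ₁Λ₂ - Γ₁Γ₂ = Λ₁(Λ₂ - Γ₂) + (Λ₁ - Γ₁)Γ₂`. A unital channel has Kraus operators with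
`∑ Kᴴ K = ∑ K Kᴴ = 1`, and then `X ↦ ∑ K X Kᴴ` does not increase the Hilbert–Schmidt norm
(expand the square and apply AM–GM to each cross term). On Choi matrices, post-composition with
`Λ₁` is the Kraus map with operators `1 ⊗ Kₐ` and pre-composition with `Γ₂` the one with operators
`Kₐᵀ ⊗ 1`; both families are again unital, so `‖J(Λ₁Δ₂)‖ ≤ ‖J(Δ₂)‖` and `‖J(Δ₁Γ₂)‖ ≤ ‖J(Δ₁)‖`.
Likewise `Γ₂` fixes `I/d` and `Λ₁` is an HS-contraction, so both components of `d_av` are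
subadditive, and the triangle inequality in `ℝ²` concludes.
-/

open scoped Matrix.Norms.Frobenius

namespace Matrix

section Frobenius

variable {m n : Type*} [Fintype m] [Fintype n]

theorem frobenius_norm_sq_eq_re_trace (A : Matrix m n ℂ) :
    ‖A‖ ^ 2 = (trace (Aᴴ * A)).re := by
  rw [frobenius_norm_def, ← Real.rpow_natCast, ← Real.rpow_mul (by positivity)]
  norm_num [trace, mul_apply, Complex.re_sum, ← Complex.normSq_eq_norm_sq, Complex.normSq_apply]
  exact Finset.sum_comm

theorem re_trace_conjTranspose_mul_le (A B : Matrix m n ℂ) :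
    (trace (Aᴴ * B)).re ≤ (‖A‖ ^ 2 + ‖B‖ ^ 2) / 2 := by
  have h : 0 ≤ (trace ((A - B)ᴴ * (A - B))).re := by
    rw [← frobenius_norm_sq_eq_re_trace]; positivity
  have hBA : (trace (Bᴴ * A)).re = (trace (Aᴴ * B)).re := by
    rw [← conjTranspose_conjTranspose A, ← conjTranspose_mul, trace_conjTranspose]
    simp
  simp only [frobenius_norm_sq_eq_re_trace, conjTranspose_sub, Matrix.sub_mul, Matrix.mul_sub,
    trace_sub, Complex.sub_re] at h ⊢
  linarith

end Frobenius

section Basis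

variable {ι l m n p : Type*} [Fintype ι]

theorem sum_kronecker {α : Type*} [NonUnitalNonAssocSemiring α] (A : ι → Matrix l m α)
    (B : Matrix n p α) : (∑ a, A a) ⊗ₖ B = ∑ a, A a ⊗ₖ B := by
  ext; simp [sum_apply, Finset.sum_mul]

theorem kronecker_sum {α : Type*} [NonUnitalNonAssocSemiring α] (A : Matrix l m α)
    (B : ι → Matrix n p α) : A ⊗ₖ (∑ a, B a) = ∑ a, A ⊗ₖ B a := by
  ext; simp [sum_apply, Finset.mul_sum]

variable [Fintype n] [DecidableEq n]

theorem linearMap_ext_single {M : Type*} [AddCommMonoid M] [Module ℂ M]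
    {f g : Matrix n n ℂ →ₗ[ℂ] M} (h : ∀ i j, f (single i j 1) = g (single i j 1)) : f = g :=
  (stdBasis ℂ n n).ext fun ⟨i, j⟩ => by rw [stdBasis_eq_single]; exact h i j

theorem trace_mul_single_one (M : Matrix n n ℂ) (i j : n) :
    trace (M * single j i 1) = M i j := by
  simp [trace_mul_single]

theorem mul_single_mul_conjTranspose_apply (K : Matrix n n ℂ) (i j x y : n) :
    (K * single i j 1 * Kᴴ : Matrix n n ℂ) x y = K x i * star (K y j) := by
  simp [mul_apply, single_apply, ite_and, Finset.sum_ite_eq]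

theorem mul_single_mul_conjTranspose (K : Matrix n n ℂ) (i j : n) :
    K * single i j 1 * Kᴴ = ∑ k, ∑ l, (K k i * star (K l j)) • single k l 1 := by
  ext x y
  simp [mul_single_mul_conjTranspose_apply, sum_apply, single_apply, ite_and]

theorem sum_single_kronecker_map_mul_single_mul_conjTranspose
    (Δ : Matrix n n ℂ →ₗ[ℂ] Matrix n n ℂ) (K : Matrix n n ℂ) :
    ∑ i, ∑ j, single i j (1 : ℂ) ⊗ₖ Δ (K * single i j 1 * Kᴴ) =
      ∑ i, ∑ j, (Kᵀ * single i j 1 * Kᵀᴴ) ⊗ₖ Δ (single i j 1) := by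
  simp only [mul_single_mul_conjTranspose, map_sum, map_smul, kronecker_sum, sum_kronecker,
    smul_kronecker, kronecker_smul, transpose_apply]
  exact (Finset.sum_congr rfl fun _ _ => Finset.sum_comm).trans <| Finset.sum_comm.trans <|
    Finset.sum_congr rfl fun _ _ =>
      (Finset.sum_congr rfl fun _ _ => Finset.sum_comm).trans Finset.sum_comm

end Basis

section Kraus

variable {ι n p : Type*} [Fintype ι] [Fintype n] [Fintype p]

def krausMap (K : ι → Matrix n n ℂ) : Matrix n n ℂ →ₗ[ℂ] Matrix n n ℂ :=
  ∑ a, LinearMap.mulLeft ℂ (K a) ∘ₗ LinearMap.mulRight ℂ (K a)ᴴ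

theorem krausMap_apply (K : ι → Matrix n n ℂ) (X : Matrix n n ℂ) :
    krausMap K X = ∑ a, K a * X * (K a)ᴴ := by
  simp [krausMap, Matrix.mul_assoc]

theorem frobenius_norm_krausMap_apply_sq (K : ι → Matrix n n ℂ) (X : Matrix n n ℂ) :
    ‖krausMap K X‖ ^ 2 =
      ∑ a, ∑ b, (trace ((X * ((K a)ᴴ * K b))ᴴ * ((K a)ᴴ * K b * X))).re := by
  rw [frobenius_norm_sq_eq_re_trace, krausMap_apply, conjTranspose_sum, Finset.sum_mul_sum,
    trace_sum, Complex.re_sum]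
  refine Finset.sum_congr rfl fun a _ => ?_
  rw [trace_sum, Complex.re_sum]
  refine Finset.sum_congr rfl fun b _ => ?_
  have e : (X * ((K a)ᴴ * K b))ᴴ * ((K a)ᴴ * K b * X) =
      (K b)ᴴ * (K a * Xᴴ * (K a)ᴴ * (K b * X)) := by
    simp only [conjTranspose_mul, conjTranspose_conjTranspose, Matrix.mul_assoc]
  rw [e, trace_mul_comm (K b)ᴴ]
  simp only [conjTranspose_mul, conjTranspose_conjTranspose, Matrix.mul_assoc]

/-- Kraus operators of a unital channel: `∑ Kᴴ K = 1` is trace preservation, `∑ K Kᴴ = 1` is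
unitality. -/
def IsUnitalKraus [DecidableEq n] (K : ι → Matrix n n ℂ) : Prop :=
  ∑ a, (K a)ᴴ * K a = 1 ∧ ∑ a, K a * (K a)ᴴ = 1

namespace IsUnitalKraus

variable [DecidableEq n] {K : ι → Matrix n n ℂ}

theorem sum_sum_norm_sq_mul (hK : IsUnitalKraus K) (X : Matrix n p ℂ) :
    ∑ a, ∑ b, ‖(K a)ᴴ * K b * X‖ ^ 2 = ‖X‖ ^ 2 := by
  have h : ∑ a, ∑ b, ((K a)ᴴ * K b * X)ᴴ * ((K a)ᴴ * K b * X) = Xᴴ * X := by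
    have e : ∀ a b, ((K a)ᴴ * K b * X)ᴴ * ((K a)ᴴ * K b * X) =
        Xᴴ * ((K b)ᴴ * (K a * (K a)ᴴ) * K b) * X := by
      intro a b; simp only [conjTranspose_mul, conjTranspose_conjTranspose, Matrix.mul_assoc]
    simp only [e]
    rw [Finset.sum_comm]
    simp only [← Matrix.mul_sum, ← Matrix.sum_mul, hK.2, Matrix.mul_one, hK.1]
  simp only [← h, frobenius_norm_sq_eq_re_trace, trace_sum, Complex.re_sum]

theorem sum_sum_norm_sq_mul_mul (hK : IsUnitalKraus K) (X : Matrix p n ℂ) :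
    ∑ a, ∑ b, ‖X * ((K a)ᴴ * K b)‖ ^ 2 = ‖X‖ ^ 2 := by
  have e : ∀ a b, ‖X * ((K a)ᴴ * K b)‖ = ‖(K b)ᴴ * K a * Xᴴ‖ := by
    intro a b
    rw [← frobenius_norm_conjTranspose]
    simp only [conjTranspose_mul, conjTranspose_conjTranspose]
  simp only [e]
  rw [Finset.sum_comm, hK.sum_sum_norm_sq_mul, frobenius_norm_conjTranspose]

theorem norm_krausMap_apply_le (hK : IsUnitalKraus K) (X : Matrix n n ℂ) :
    ‖krausMap K X‖ ≤ ‖X‖ := by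
  refine (pow_le_pow_iff_left₀ (norm_nonneg _) (norm_nonneg _) two_ne_zero).mp ?_
  calc ‖krausMap K X‖ ^ 2
      = ∑ a, ∑ b, (trace ((X * ((K a)ᴴ * K b))ᴴ * ((K a)ᴴ * K b * X))).re :=
        frobenius_norm_krausMap_apply_sq K X
    _ ≤ ∑ a, ∑ b, (‖X * ((K a)ᴴ * K b)‖ ^ 2 + ‖(K a)ᴴ * K b * X‖ ^ 2) / 2 := by
        gcongr with a _ b _
        exact re_trace_conjTranspose_mul_le _ _
    _ = ‖X‖ ^ 2 := by
        simp only [← Finset.sum_div, Finset.sum_add_distrib, hK.sum_sum_norm_sq_mul,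
          hK.sum_sum_norm_sq_mul_mul]
        ring

theorem transpose (hK : IsUnitalKraus K) : IsUnitalKraus fun a => (K a)ᵀ := by
  constructor
  · simp only [conjTranspose_transpose_eq_transpose_conjTranspose, ← transpose_mul,
      ← transpose_sum, hK.2, transpose_one]
  · simp only [conjTranspose_transpose_eq_transpose_conjTranspose, ← transpose_mul,
      ← transpose_sum, hK.1, transpose_one]

theorem kronecker_one {m : Type*} [Fintype m] [DecidableEq m] (hK : IsUnitalKraus K) :
    IsUnitalKraus fun a => K a ⊗ₖ (1 : Matrix m m ℂ) := by
  constructor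
  · simp only [conjTranspose_kronecker, ← mul_kronecker_mul, conjTranspose_one, mul_one,
      ← sum_kronecker, hK.1, one_kronecker_one]
  · simp only [conjTranspose_kronecker, ← mul_kronecker_mul, conjTranspose_one, mul_one,
      ← sum_kronecker, hK.2, one_kronecker_one]

theorem one_kronecker {m : Type*} [Fintype m] [DecidableEq m] (hK : IsUnitalKraus K) :
    IsUnitalKraus fun a => (1 : Matrix m m ℂ) ⊗ₖ K a := by
  constructor
  · simp only [conjTranspose_kronecker, ← mul_kronecker_mul, conjTranspose_one, mul_one,
      ← kronecker_sum, hK.1, one_kronecker_one]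
  · simp only [conjTranspose_kronecker, ← mul_kronecker_mul, conjTranspose_one, mul_one,
      ← kronecker_sum, hK.2, one_kronecker_one]

end IsUnitalKraus

theorem isUnitalKraus_of_krausMap [DecidableEq n] {K : ι → Matrix n n ℂ}
    (htp : ∀ X, trace (krausMap K X) = trace X) (hu : krausMap K 1 = 1) : IsUnitalKraus K := by
  refine ⟨?_, by simpa [krausMap_apply] using hu⟩
  ext i j
  calc (∑ a, (K a)ᴴ * K a) i j = trace ((∑ a, (K a)ᴴ * K a) * single j i 1) :=
        (trace_mul_single_one _ _ _).symm
    _ = trace (krausMap K (single j i 1)) := by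
        simp only [krausMap_apply, trace_sum, Matrix.sum_mul]
        exact Finset.sum_congr rfl fun a _ => by rw [Matrix.mul_assoc, trace_mul_comm]
    _ = trace (1 * single j i 1) := by rw [htp, Matrix.one_mul]
    _ = (1 : Matrix n n ℂ) i j := trace_mul_single_one _ _ _

end Kraus

end Matrix

theorem hsNorm_eq_norm {n : Type*} [Fintype n] (A : Matrix n n ℂ) : hsNorm A = ‖A‖ := by
  rw [hsNorm, ← frobenius_norm_sq_eq_re_trace, Real.sqrt_sq (norm_nonneg A)]

theorem Real.sqrt_sq_add_sq_le {a b a₁ b₁ a₂ b₂ : ℝ} (ha : 0 ≤ a) (hb : 0 ≤ b)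
    (ha' : a ≤ a₁ + a₂) (hb' : b ≤ b₁ + b₂) :
    √(a ^ 2 + b ^ 2) ≤ √(a₁ ^ 2 + b₁ ^ 2) + √(a₂ ^ 2 + b₂ ^ 2) := by
  calc √(a ^ 2 + b ^ 2) ≤ √((a₁ + a₂) ^ 2 + (b₁ + b₂) ^ 2) := by gcongr
    _ = ‖(⟨a₁, b₁⟩ + ⟨a₂, b₂⟩ : ℂ)‖ := by simp [Complex.norm_eq_sqrt_sq_add_sq]
    _ ≤ ‖(⟨a₁, b₁⟩ : ℂ)‖ + ‖(⟨a₂, b₂⟩ : ℂ)‖ := norm_add_le _ _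
    _ = _ := by simp [Complex.norm_eq_sqrt_sq_add_sq]

section Choi

variable {ι n : Type*} [Fintype ι] [Fintype n] [DecidableEq n]

theorem choi_apply (Λ : Matrix n n ℂ →ₗ[ℂ] Matrix n n ℂ) (i x j y : n) :
    choi Λ (i, x) (j, y) = (Fintype.card n : ℂ)⁻¹ * Λ (single i j 1) x y := by
  have : Nonempty n := ⟨i⟩
  simp [choi, Matrix.sum_apply, single_apply, ite_and]

theorem choi_add (Λ Γ : Matrix n n ℂ →ₗ[ℂ] Matrix n n ℂ) :
    choi (Λ + Γ) = choi Λ + choi Γ := by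
  ext ⟨i, x⟩ ⟨j, y⟩
  simp only [Matrix.add_apply, choi_apply, LinearMap.add_apply]
  ring

theorem choi_sub (Λ Γ : Matrix n n ℂ →ₗ[ℂ] Matrix n n ℂ) :
    choi (Λ - Γ) = choi Λ - choi Γ := by
  ext ⟨i, x⟩ ⟨j, y⟩
  simp only [Matrix.sub_apply, choi_apply, LinearMap.sub_apply]
  ring

theorem exists_eq_krausMap_of_posSemidef_choi {Λ : Matrix n n ℂ →ₗ[ℂ] Matrix n n ℂ}
    (h : (choi Λ).PosSemidef) : ∃ (m : ℕ) (K : Fin m → Matrix n n ℂ), Λ = krausMap K := by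
  cases isEmpty_or_nonempty n
  · exact ⟨0, Fin.elim0, Subsingleton.elim _ _⟩
  obtain ⟨m, v, hv⟩ := posSemidef_iff_eq_sum_vecMulVec.mp h
  set d : ℝ := (Fintype.card n : ℝ)
  have hd : (d : ℂ) ≠ 0 := by simp [d, Fintype.card_ne_zero]
  refine ⟨m, fun a => of fun x i => √d * v a (i, x), linearMap_ext_single fun i j => ?_⟩
  ext x y
  have hΛ : Λ (single i j 1) x y = d * choi Λ (i, x) (j, y) := by
    rw [choi_apply]; push_cast [d]; field_simp
  rw [hΛ, hv, krausMap_apply, Matrix.sum_apply, Matrix.sum_apply, Finset.mul_sum]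
  refine Finset.sum_congr rfl fun a _ => ?_
  simp only [mul_single_mul_conjTranspose_apply, vecMulVec_apply, of_apply, Pi.star_apply,
    star_mul', Complex.star_def, Complex.conj_ofReal]
  rw [show (d : ℂ) = √d * √d by rw [← Complex.ofReal_mul, Real.mul_self_sqrt (by positivity)]]
  ring

theorem IsChannel.exists_isUnitalKraus {Λ : Matrix n n ℂ →ₗ[ℂ] Matrix n n ℂ}
    (hΛ : IsChannel Λ) (hu : Λ 1 = 1) :
    ∃ (m : ℕ) (K : Fin m → Matrix n n ℂ), IsUnitalKraus K ∧ Λ = krausMap K := by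
  obtain ⟨m, K, rfl⟩ := exists_eq_krausMap_of_posSemidef_choi hΛ.1
  exact ⟨m, K, isUnitalKraus_of_krausMap hΛ.2 hu, rfl⟩

theorem choi_krausMap_comp (K : ι → Matrix n n ℂ) (Δ : Matrix n n ℂ →ₗ[ℂ] Matrix n n ℂ) :
    choi (krausMap K ∘ₗ Δ) = krausMap (fun a => (1 : Matrix n n ℂ) ⊗ₖ K a) (choi Δ) := by
  simp only [choi, krausMap_apply, LinearMap.comp_apply, Matrix.mul_smul, Matrix.smul_mul,
    Finset.mul_sum, Finset.sum_mul, conjTranspose_kronecker, conjTranspose_one,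
    ← mul_kronecker_mul, one_mul, mul_one, kronecker_sum, ← Finset.smul_sum]
  congr 1
  symm
  rw [Finset.sum_comm]
  exact Finset.sum_congr rfl fun i _ => Finset.sum_comm

theorem choi_comp_krausMap (Δ : Matrix n n ℂ →ₗ[ℂ] Matrix n n ℂ) (K : ι → Matrix n n ℂ) :
    choi (Δ ∘ₗ krausMap K) = krausMap (fun a => (K a)ᵀ ⊗ₖ (1 : Matrix n n ℂ)) (choi Δ) := by
  simp only [choi, krausMap_apply, LinearMap.comp_apply, map_sum, kronecker_sum, Matrix.mul_smul,
    Matrix.smul_mul, Finset.mul_sum, Finset.sum_mul, conjTranspose_kronecker, conjTranspose_one,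
    ← mul_kronecker_mul, mul_one, one_mul, ← Finset.smul_sum]
  congr 1
  rw [← Finset.sum_congr rfl fun a _ =>
    sum_single_kronecker_map_mul_single_mul_conjTranspose Δ (K a)]
  exact (Finset.sum_congr rfl fun _ _ => Finset.sum_comm).trans Finset.sum_comm

theorem Matrix.IsUnitalKraus.norm_choi_krausMap_comp_le {K : ι → Matrix n n ℂ} (hK : IsUnitalKraus K)
    (Δ : Matrix n n ℂ →ₗ[ℂ] Matrix n n ℂ) : ‖choi (krausMap K ∘ₗ Δ)‖ ≤ ‖choi Δ‖ := by
  rw [choi_krausMap_comp]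
  exact hK.one_kronecker.norm_krausMap_apply_le _

theorem Matrix.IsUnitalKraus.norm_choi_comp_krausMap_le {K : ι → Matrix n n ℂ} (hK : IsUnitalKraus K)
    (Δ : Matrix n n ℂ →ₗ[ℂ] Matrix n n ℂ) : ‖choi (Δ ∘ₗ krausMap K)‖ ≤ ‖choi Δ‖ := by
  rw [choi_comp_krausMap]
  exact hK.transpose.kronecker_one.norm_krausMap_apply_le _

end Choi

theorem statement15_general (d : ℕ)
    (Λ₁ Λ₂ Γ₁ Γ₂ : Matrix (Fin d) (Fin d) ℂ →ₗ[ℂ] Matrix (Fin d) (Fin d) ℂ)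
    (hΛ₁ : IsChannel Λ₁) (hΛ₁u : Λ₁ 1 = 1)
    (hΓ₂ : IsChannel Γ₂) (hΓ₂u : Γ₂ 1 = 1) :
    davCh (Λ₁ ∘ₗ Λ₂) (Γ₁ ∘ₗ Γ₂) ≤ davCh Λ₁ Γ₁ + davCh Λ₂ Γ₂ := by
  obtain ⟨_, K₁, hK₁, rfl⟩ := hΛ₁.exists_isUnitalKraus hΛ₁u
  obtain ⟨_, K₂, hK₂, rfl⟩ := hΓ₂.exists_isUnitalKraus hΓ₂u
  set u : Matrix (Fin d) (Fin d) ℂ := ((Fintype.card (Fin d) : ℂ))⁻¹ • 1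
  have hsplit : krausMap K₁ ∘ₗ Λ₂ - Γ₁ ∘ₗ krausMap K₂ =
      krausMap K₁ ∘ₗ (Λ₂ - krausMap K₂) + (krausMap K₁ - Γ₁) ∘ₗ krausMap K₂ := by
    rw [LinearMap.comp_sub, LinearMap.sub_comp]; abel
  have hchoi : ‖choi (krausMap K₁ ∘ₗ Λ₂) - choi (Γ₁ ∘ₗ krausMap K₂)‖ ≤
      ‖choi Λ₂ - choi (krausMap K₂)‖ + ‖choi (krausMap K₁) - choi Γ₁‖ := by
    rw [← choi_sub, hsplit, choi_add, ← choi_sub, ← choi_sub]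
    exact (norm_add_le _ _).trans <| add_le_add (hK₁.norm_choi_krausMap_comp_le _)
      (hK₂.norm_choi_comp_krausMap_le _)
  have hunit : ‖(krausMap K₁ ∘ₗ Λ₂) u - (Γ₁ ∘ₗ krausMap K₂) u‖ ≤
      ‖Λ₂ u - krausMap K₂ u‖ + ‖krausMap K₁ u - Γ₁ u‖ := by
    have hu : krausMap K₂ u = u := by rw [map_smul, hΓ₂u]
    rw [← LinearMap.sub_apply, hsplit]
    simp only [LinearMap.add_apply, LinearMap.comp_apply, LinearMap.sub_apply, hu]
    exact (norm_add_le _ _).trans <| add_le_add_left (hK₁.norm_krausMap_apply_le _) _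
  simp only [davCh, hsNorm_eq_norm]
  have := Real.sqrt_sq_add_sq_le (norm_nonneg _) (norm_nonneg _) hchoi hunit
  linarith

theorem statement15 (d : ℕ)
    (Λ₁ Λ₂ Γ₁ Γ₂ : Matrix (Fin d) (Fin d) ℂ →ₗ[ℂ] Matrix (Fin d) (Fin d) ℂ)
    (hΛ₁ : IsChannel Λ₁) (hΛ₁u : Λ₁ 1 = 1) (hΛ₂ : IsChannel Λ₂) (hΛ₂u : Λ₂ 1 = 1)
    (hΓ₁ : IsChannel Γ₁) (hΓ₁u : Γ₁ 1 = 1) (hΓ₂ : IsChannel Γ₂) (hΓ₂u : Γ₂ 1 = 1) :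
    davCh (Λ₁ ∘ₗ Λ₂) (Γ₁ ∘ₗ Γ₂) ≤ davCh Λ₁ Γ₁ + davCh Λ₂ Γ₂ :=
  statement15_general d Λ₁ Λ₂ Γ₁ Γ₂ hΛ₁ hΛ₁u hΓ₂ hΓ₂u
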